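/- arXiv:2107.11866 — 8 statements merged into one kernel-verified Lean document; each statement's English description precedes it below -/
import Mathlib

section
/- The deformed A3 reduced map φ̂(y,w) = ((d(y+1)w + c)/y, (dw+c)/(yw) + (e-c)/(w(y+1))) preserves the symplectic form d(log y) ∧ d(log w); equivalently, if (ỹ, w̃) = φ̂(y,w), then det Dφ̂(y,w) · y w = ỹ w̃ wherever defined. -/
section PartialDerivatives

variable {𝕜 F : Type*} [NontriviallyNormedField 𝕜] [NormedAddCommGroup F] [NormedSpace 𝕜 F]
  {f : 𝕜 × 𝕜 → F} {x y : 𝕜} {D : F}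

theorem fderiv_apply_one_zero_eq_of_hasDerivAt (hf : DifferentiableAt 𝕜 f (x, y))
    (h : HasDerivAt (fun t => f (t, y)) D x) : fderiv 𝕜 f (x, y) (1, 0) = D := by
  simpa using (hf.hasFDerivAt.comp_hasDerivAt x
    ((hasDerivAt_id x).prodMk (hasDerivAt_const x y))).unique h

theorem fderiv_apply_zero_one_eq_of_hasDerivAt (hf : DifferentiableAt 𝕜 f (x, y))
    (h : HasDerivAt (fun t => f (x, t)) D y) : fderiv 𝕜 f (x, y) (0, 1) = D := by
  simpa using (hf.hasFDerivAt.comp_hasDerivAt y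
    ((hasDerivAt_const y x).prodMk (hasDerivAt_id y))).unique h

end PartialDerivatives

theorem deformedA3_fst_partials (c d : ℝ) {y w : ℝ} (hy : y ≠ 0) :
    fderiv ℝ (fun p : ℝ × ℝ => (d * (p.1 + 1) * p.2 + c) / p.1) (y, w) (1, 0)
        = -(d * w + c) / y ^ 2 ∧
      fderiv ℝ (fun p : ℝ × ℝ => (d * (p.1 + 1) * p.2 + c) / p.1) (y, w) (0, 1)
        = d * (y + 1) / y := by
  have hdiff : DifferentiableAt ℝ
      (fun p : ℝ × ℝ => (d * (p.1 + 1) * p.2 + c) / p.1) (y, w) := by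
    fun_prop (disch := exact hy)
  have hy' : HasDerivAt (fun t => (d * (t + 1) * w + c) / t) (-(d * w + c) / y ^ 2) y :=
    (((((hasDerivAt_id' y).add_const 1).const_mul d).mul_const w).add_const c).div
      (hasDerivAt_id' y) hy |>.congr_deriv (by ring)
  have hw' : HasDerivAt (fun t => (d * (y + 1) * t + c) / y) (d * (y + 1) / y) w :=
    (((hasDerivAt_id' w).const_mul (d * (y + 1))).add_const c).div_const y |>.congr_deriv
      (by ring)
  exact ⟨fderiv_apply_one_zero_eq_of_hasDerivAt hdiff hy',
    fderiv_apply_zero_one_eq_of_hasDerivAt hdiff hw'⟩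

theorem deformedA3_snd_partials (c d e : ℝ) {y w : ℝ} (hy : y ≠ 0) (hw : w ≠ 0)
    (hy1 : y + 1 ≠ 0) :
    fderiv ℝ (fun p : ℝ × ℝ => (d * p.2 + c) / (p.1 * p.2) + (e - c) / (p.2 * (p.1 + 1)))
        (y, w) (1, 0) = -(d * w + c) / (y ^ 2 * w) - (e - c) / (w * (y + 1) ^ 2) ∧
      fderiv ℝ (fun p : ℝ × ℝ => (d * p.2 + c) / (p.1 * p.2) + (e - c) / (p.2 * (p.1 + 1)))
        (y, w) (0, 1) = -c / (y * w ^ 2) - (e - c) / (w ^ 2 * (y + 1)) := by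
  have hyw : y * w ≠ 0 := mul_ne_zero hy hw
  have hwy1 : w * (y + 1) ≠ 0 := mul_ne_zero hw hy1
  have hdiff : DifferentiableAt ℝ (fun p : ℝ × ℝ =>
      (d * p.2 + c) / (p.1 * p.2) + (e - c) / (p.2 * (p.1 + 1))) (y, w) := by
    fun_prop (disch := simp [*])
  have hy' : HasDerivAt (fun t => (d * w + c) / (t * w) + (e - c) / (w * (t + 1)))
      (-(d * w + c) / (y ^ 2 * w) - (e - c) / (w * (y + 1) ^ 2)) y :=
    ((hasDerivAt_const y (d * w + c)).div ((hasDerivAt_id' y).mul_const w) hyw).add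
      ((hasDerivAt_const y (e - c)).div (((hasDerivAt_id' y).add_const 1).const_mul w) hwy1)
      |>.congr_deriv (by field_simp; ring)
  have hw' : HasDerivAt (fun t => (d * t + c) / (y * t) + (e - c) / (t * (y + 1)))
      (-c / (y * w ^ 2) - (e - c) / (w ^ 2 * (y + 1))) w :=
    ((((hasDerivAt_id' w).const_mul d).add_const c).div ((hasDerivAt_id' w).const_mul y) hyw).add
      ((hasDerivAt_const w (e - c)).div ((hasDerivAt_id' w).mul_const (y + 1)) hwy1)
      |>.congr_deriv (by field_simp; ring)
  exact ⟨fderiv_apply_one_zero_eq_of_hasDerivAt hdiff hy',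
    fderiv_apply_zero_one_eq_of_hasDerivAt hdiff hw'⟩

/-- The deformed `A₃` reduced map
`φ̂(y,w) = ((d(y+1)w + c)/y, (dw+c)/(yw) + (e-c)/(w(y+1)))`
preserves the symplectic form `d(log y) ∧ d(log w)`: the determinant of its Jacobian
matrix at `(y,w)` times `yw` equals the product of the coordinates of the image. -/
theorem deformedA3_symplectic (c d e y w : ℝ)
    (hy : y ≠ 0) (hw : w ≠ 0) (hy1 : y + 1 ≠ 0) :
    (Matrix.det
      !![fderiv ℝ (fun p : ℝ × ℝ => (d * (p.1 + 1) * p.2 + c) / p.1) (y, w) (1, 0),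
         fderiv ℝ (fun p : ℝ × ℝ => (d * (p.1 + 1) * p.2 + c) / p.1) (y, w) (0, 1);
         fderiv ℝ (fun p : ℝ × ℝ =>
            (d * p.2 + c) / (p.1 * p.2) + (e - c) / (p.2 * (p.1 + 1))) (y, w) (1, 0),
         fderiv ℝ (fun p : ℝ × ℝ =>
            (d * p.2 + c) / (p.1 * p.2) + (e - c) / (p.2 * (p.1 + 1))) (y, w) (0, 1)])
      * (y * w)
      = ((d * (y + 1) * w + c) / y)
        * ((d * w + c) / (y * w) + (e - c) / (w * (y + 1))) := by
  obtain ⟨h₁₁, h₁₂⟩ := deformedA3_fst_partials c d (w := w) hy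
  obtain ⟨h₂₁, h₂₂⟩ := deformedA3_snd_partials c d e hy hw hy1
  rw [h₁₁, h₁₂, h₂₁, h₂₂, Matrix.det_fin_two_of]
  field_simp
  ring
end

section
/- When c = e, the function K_1(y,w) = (yw + w + d)(y + dw + c)/(yw) is a first integral of the map φ̂(y,w) = ((d(y+1)w + c)/y, (dw+c)/(yw)): K_1(φ̂(y,w)) = K_1(y,w) for all (y,w) where both sides are defined. -/
/-- The deformed `A₃` reduced map with `e = c`. -/
def deformedA3 {F : Type*} [Field F] (c d : F) (p : F × F) : F × F :=
  ((d * (p.1 + 1) * p.2 + c) / p.1, (d * p.2 + c) / (p.1 * p.2))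

/-! With `(Y, W) = φ̂(y, w)`, the two factors of `K₁` are exchanged by `φ̂` up to multipliers:
`YW + W + d = Y (y + dw + c) / (yw)` and `Y + dW + c = (dw + c)(yw + w + d) / (yw)`.
Since `W = (dw + c) / (yw)`, the product of the multipliers is exactly `YW`, which cancels the
denominator of `K₁(Y, W)`. -/

section

variable {F : Type*} [Field F] {c d y w : F}

theorem deformedA3_fst_mul_snd_add_snd_add (hy : y ≠ 0) (hw : w ≠ 0) :
    (deformedA3 c d (y, w)).1 * (deformedA3 c d (y, w)).2 + (deformedA3 c d (y, w)).2 + d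
      = (deformedA3 c d (y, w)).1 * (y + d * w + c) / (y * w) := by
  simp only [deformedA3]
  field_simp
  ring

theorem deformedA3_fst_add_mul_snd_add (hy : y ≠ 0) (hw : w ≠ 0) :
    (deformedA3 c d (y, w)).1 + d * (deformedA3 c d (y, w)).2 + c
      = (d * w + c) * (y * w + w + d) / (y * w) := by
  simp only [deformedA3]
  field_simp
  ring

end

/-- When `e = c`, `K₁(y,w) = (yw + w + d)(y + dw + c)/(yw)` is a first integral of the
deformed `A₃` reduced map. -/
theorem deformedA3_K1_invariant {F : Type*} [Field F] (c d y w : F)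
    (hy : y ≠ 0) (hw : w ≠ 0)
    (hy' : (deformedA3 c d (y, w)).1 ≠ 0) (hw' : (deformedA3 c d (y, w)).2 ≠ 0) :
    ((deformedA3 c d (y, w)).1 * (deformedA3 c d (y, w)).2 + (deformedA3 c d (y, w)).2 + d)
        * ((deformedA3 c d (y, w)).1 + d * (deformedA3 c d (y, w)).2 + c)
        / ((deformedA3 c d (y, w)).1 * (deformedA3 c d (y, w)).2)
      = (y * w + w + d) * (y + d * w + c) / (y * w) := by
  rw [deformedA3_fst_mul_snd_add_snd_add hy hw, deformedA3_fst_add_mul_snd_add hy hw]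
  have hsnd : (deformedA3 c d (y, w)).2 = (d * w + c) / (y * w) := rfl
  have hnum : d * w + c ≠ 0 := fun h => hw' (by rw [hsnd, h, zero_div])
  rw [hsnd]
  field_simp
end

section
/- When c = d², the map φ̂(y,w) = ((d(y+1)w + d²)/y, d(w+d)/(yw)) has period 3: φ̂³(y,w) = (y,w) for all (y,w) in the domain where all three iterates are defined. -/
/-- The deformed `A₃` reduced map with `c = e = d²`. -/
def deformedA3sq {F : Type*} [Field F] (d : F) (p : F × F) : F × F :=
  ((d * (p.1 + 1) * p.2 + d ^ 2) / p.1, d * (p.2 + d) / (p.1 * p.2))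

/-! The second iterate has the closed form
`φ̂²(y, w) = (d (d (w + d) + y) / (y w), y / (w + d))`, and one more application of `φ̂`
returns `(y, w)`; the nonvanishing of the first iterates makes every denominator nonzero. -/

section

variable {F : Type*} [Field F] (d : F) {y w : F}

theorem deformedA3sq_fst (y w : F) :
    (deformedA3sq d (y, w)).1 = d * ((y + 1) * w + d) / y := by
  simp only [deformedA3sq]
  ring

theorem deformedA3sq_snd (y w : F) : (deformedA3sq d (y, w)).2 = d * (w + d) / (y * w) := rfl

theorem deformedA3sq_deformedA3sq (hd : d ≠ 0) (hy : y ≠ 0) (hw : w ≠ 0)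
    (hN : (y + 1) * w + d ≠ 0) (hwd : w + d ≠ 0) :
    deformedA3sq d (deformedA3sq d (y, w)) = (d * (d * (w + d) + y) / (y * w), y / (w + d)) := by
  rw [deformedA3sq, deformedA3sq_fst, deformedA3sq_snd]
  ext
  · field_simp
    ring
  · rw [div_eq_div_iff (by positivity) hwd]
    field_simp
    ring

theorem deformedA3sq_apply_sq_closed_form (hd : d ≠ 0) (hy : y ≠ 0) (hw : w ≠ 0)
    (hM : d * (w + d) + y ≠ 0) (hwd : w + d ≠ 0) :
    deformedA3sq d (d * (d * (w + d) + y) / (y * w), y / (w + d)) = (y, w) := by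
  rw [deformedA3sq]
  ext <;> field_simp <;> ring

end

theorem deformedA3sq_period_three_general {F : Type*} [Field F] (d : F)
    (y w : F) (hy : y ≠ 0) (hw : w ≠ 0)
    (h1 : (deformedA3sq d (y, w)).1 ≠ 0) (h2 : (deformedA3sq d (y, w)).2 ≠ 0)
    (h3 : (deformedA3sq d (deformedA3sq d (y, w))).1 ≠ 0) :
    deformedA3sq d (deformedA3sq d (deformedA3sq d (y, w))) = (y, w) := by
  rw [deformedA3sq_fst, div_ne_zero_iff, mul_ne_zero_iff] at h1
  rw [deformedA3sq_snd, div_ne_zero_iff, mul_ne_zero_iff] at h2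
  obtain ⟨⟨hd, hN⟩, -⟩ := h1
  obtain ⟨⟨-, hwd⟩, -⟩ := h2
  rw [deformedA3sq_deformedA3sq d hd hy hw hN hwd] at h3 ⊢
  obtain ⟨⟨-, hM⟩, -⟩ := div_ne_zero_iff.mp h3 |>.imp_left mul_ne_zero_iff.mp
  exact deformedA3sq_apply_sq_closed_form d hd hy hw hM hwd

/-- When `c = d²`, the deformed `A₃` reduced map has period 3. -/
theorem deformedA3sq_period_three {F : Type*} [Field F] (d : F) (hd : d ≠ 0)
    (y w : F) (hy : y ≠ 0) (hw : w ≠ 0)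
    (h1 : (deformedA3sq d (y, w)).1 ≠ 0) (h2 : (deformedA3sq d (y, w)).2 ≠ 0)
    (h3 : (deformedA3sq d (deformedA3sq d (y, w))).1 ≠ 0)
    (h4 : (deformedA3sq d (deformedA3sq d (y, w))).2 ≠ 0) :
    deformedA3sq d (deformedA3sq d (deformedA3sq d (y, w))) = (y, w) :=
  deformedA3sq_period_three_general d y w hy hw h1 h2 h3
end

section
/- The maps φ̂(y,w) = ((d(y+1)w + c)/y, (dw+c)/(yw)) and the QRT-type map ψ̂ defined by ψ̂(y,w) = (ȳ, w̄) with ȳ = (dw+c)(w+d)/(wy) and w̄ = (ȳ + c)/(w(ȳ + 1)) commute: φ̂ ∘ ψ̂ = ψ̂ ∘ φ̂ as birational maps (i.e., they agree at every point where both compositions are defined). -/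
/-- The deformed `A₃` reduced map `φ̂` (with `e = c`). -/
def phiHat {F : Type*} [Field F] (c d : F) (p : F × F) : F × F :=
  ((d * (p.1 + 1) * p.2 + c) / p.1, (d * p.2 + c) / (p.1 * p.2))

/-- The QRT-type map `ψ̂` preserving the same pencil of biquadratic curves:
`ȳ = (dw+c)(w+d)/(wy)` and `w̄ = (ȳ + c)/(w(ȳ + 1))`. -/
def psiHat {F : Type*} [Field F] (c d : F) (p : F × F) : F × F :=
  ((d * p.2 + c) * (p.2 + d) / (p.2 * p.1),
   ((d * p.2 + c) * (p.2 + d) / (p.2 * p.1) + c)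
      / (p.2 * ((d * p.2 + c) * (p.2 + d) / (p.2 * p.1) + 1)))

/-!
Both composites are computed in closed form. Cancelling the factor `w + d` from `φ̂ ∘ ψ̂` and
the factor `d (y + 1) w + c` from `ψ̂ ∘ φ̂` leaves the same rational map `reducedComposite`.
-/

section

variable {F : Type*} [Field F]

def reducedComposite (c d y w : F) : F × F :=
  ((d * (d * w + c) + c * w * y) / (w * (d * w + c)),
    w * y * (d * (d * w + c) + c * w * (d * w + c) + c * w * y) /
      ((d * w + c) * ((d * w + c) * (w + d) + c * w * y)))

variable (c d : F) {y w : F}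

theorem psiHat_snd_eq (p : F × F) :
    (psiHat c d p).2 = ((psiHat c d p).1 + c) / (p.2 * ((psiHat c d p).1 + 1)) :=
  rfl

theorem psiHat_fst_add_one (hy : y ≠ 0) (hw : w ≠ 0) :
    (psiHat c d (y, w)).1 + 1 = ((d * w + c) * (w + d) + w * y) / (w * y) := by
  simp only [psiHat]
  field_simp

theorem phiHat_psiHat_eq_reducedComposite (hy : y ≠ 0) (hw : w ≠ 0) (hB : w + d ≠ 0)
    (hN : (d * w + c) * (w + d) + w * y ≠ 0) :
    phiHat c d (psiHat c d (y, w)) = reducedComposite c d y w := by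
  simp only [phiHat, psiHat, reducedComposite, Prod.mk.injEq]
  constructor
  · field_simp
    ring
  · field_simp
    ring

theorem psiHat_phiHat_eq_reducedComposite (hy : y ≠ 0) (hw : w ≠ 0) (hA : d * w + c ≠ 0)
    (hP : d * (y + 1) * w + c ≠ 0) :
    psiHat c d (phiHat c d (y, w)) = reducedComposite c d y w := by
  have hfst : (psiHat c d (phiHat c d (y, w))).1 = (reducedComposite c d y w).1 := by
    simp only [phiHat, psiHat, reducedComposite]
    rw [div_eq_div_iff (by simp [*]) (by simp [*])]
    field_simp
    ring
  have hfst_add_one : (reducedComposite c d y w).1 + 1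
      = ((d * w + c) * (w + d) + c * w * y) / (w * (d * w + c)) := by
    simp only [reducedComposite]
    field_simp
    ring
  refine Prod.ext hfst ?_
  rw [psiHat_snd_eq, hfst, hfst_add_one]
  simp only [phiHat, reducedComposite]
  field_simp
  ring

end

theorem phiHat_psiHat_commute_general {F : Type*} [Field F] (c d : F)
    (y w : F) (hy : y ≠ 0) (hw : w ≠ 0)
    (hq1 : (phiHat c d (y, w)).1 ≠ 0)
    (hr1 : (psiHat c d (y, w)).1 ≠ 0)
    (hden0 : (psiHat c d (y, w)).1 + 1 ≠ 0) :
    phiHat c d (psiHat c d (y, w)) = psiHat c d (phiHat c d (y, w)) := by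
  have hP : d * (y + 1) * w + c ≠ 0 := (div_ne_zero_iff.1 hq1).1
  obtain ⟨hA, hB⟩ : d * w + c ≠ 0 ∧ w + d ≠ 0 :=
    mul_ne_zero_iff.1 (div_ne_zero_iff.1 hr1).1
  have hN : (d * w + c) * (w + d) + w * y ≠ 0 := by
    rw [psiHat_fst_add_one c d hy hw] at hden0
    exact (div_ne_zero_iff.1 hden0).1
  rw [phiHat_psiHat_eq_reducedComposite c d hy hw hB hN,
    psiHat_phiHat_eq_reducedComposite c d hy hw hA hP]

/-- The maps `φ̂` and `ψ̂` commute wherever both compositions are defined. -/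
theorem phiHat_psiHat_commute {F : Type*} [Field F] [CharZero F] (c d : F)
    (y w : F) (hy : y ≠ 0) (hw : w ≠ 0)
    (hq1 : (phiHat c d (y, w)).1 ≠ 0) (hq2 : (phiHat c d (y, w)).2 ≠ 0)
    (hr1 : (psiHat c d (y, w)).1 ≠ 0) (hr2 : (psiHat c d (y, w)).2 ≠ 0)
    (hden0 : (psiHat c d (y, w)).1 + 1 ≠ 0)
    (hden1 : (psiHat c d (phiHat c d (y, w))).1 + 1 ≠ 0) :
    phiHat c d (psiHat c d (y, w)) = psiHat c d (phiHat c d (y, w)) :=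
  phiHat_psiHat_commute_general c d y w hy hw hq1 hr1 hden0
end

section
/- The tau-function substitution y_n = τ_{n-2}τ_{n+1}/(τ_{n-1}τ_n), w_n = σ_{n+1}τ_{n-1}/(σ_n τ_n) transforms solutions of the bilinear system σ_{n+2}τ_{n-2} = d σ_{n+1}τ_{n-1} + c σ_n τ_n and σ_n τ_{n+2} = σ_{n+2}τ_n + d σ_{n+1}τ_{n+1} into solutions of the map (y_{n+1}, w_{n+1}) = ((d(y_n+1)w_n + c)/y_n, (dw_n+c)/(y_n w_n)). -/
/-!
Clearing the denominators `y_n` and `y_n w_n`, both components telescope: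
`y_{n+1} y_n = τ_{n-2}τ_{n+2}/τ_n²` and `w_{n+1} y_n w_n = σ_{n+2}τ_{n-2}/(σ_nτ_n)`.
The second equation of the map is then the first bilinear equation divided by `σ_nτ_n`; the
first is `τ_{n-2}` times the second bilinear equation plus `τ_n` times the first one, divided
by `σ_nτ_n²`.
-/

namespace A3Tau

variable {F : Type*} [Field F] (σ τ : ℤ → F)

def tauY (n : ℤ) : F := τ (n - 2) * τ (n + 1) / (τ (n - 1) * τ n)

def tauW (n : ℤ) : F := σ (n + 1) * τ (n - 1) / (σ n * τ n)

variable {σ τ}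

theorem tauY_ne_zero (hτ : ∀ n, τ n ≠ 0) (n : ℤ) : tauY τ n ≠ 0 := by
  unfold tauY
  have := hτ (n - 2); have := hτ (n + 1); have := hτ (n - 1); have := hτ n
  positivity

theorem tauW_ne_zero (hσ : ∀ n, σ n ≠ 0) (hτ : ∀ n, τ n ≠ 0) (n : ℤ) :
    tauW σ τ n ≠ 0 := by
  unfold tauW
  have := hσ (n + 1); have := hτ (n - 1); have := hσ n; have := hτ n
  positivity

theorem tauY_succ_mul_tauY (hτ : ∀ n, τ n ≠ 0) (n : ℤ) :
    tauY τ (n + 1) * tauY τ n = τ (n - 2) * τ (n + 2) / τ n ^ 2 := by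
  have := hτ (n - 1); have := hτ (n + 1)
  simp only [tauY, show n + 1 - 2 = n - 1 by ring, show n + 1 + 1 = n + 2 by ring,
    show n + 1 - 1 = n by ring]
  field_simp

theorem tauW_succ_mul_tauY_mul_tauW (hσ : ∀ n, σ n ≠ 0) (hτ : ∀ n, τ n ≠ 0) (n : ℤ) :
    tauW σ τ (n + 1) * (tauY τ n * tauW σ τ n) = σ (n + 2) * τ (n - 2) / (σ n * τ n) := by
  have := hσ (n + 1); have := hτ (n - 1); have := hτ (n + 1)
  simp only [tauY, tauW, show n + 1 + 1 = n + 2 by ring, show n + 1 - 1 = n by ring]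
  field_simp

variable {c d : F}

theorem tauY_succ_mul_tauY_eq (hσ : ∀ n, σ n ≠ 0) (hτ : ∀ n, τ n ≠ 0) (n : ℤ)
    (h₁ : σ (n + 2) * τ (n - 2) = d * σ (n + 1) * τ (n - 1) + c * σ n * τ n)
    (h₂ : σ n * τ (n + 2) = σ (n + 2) * τ n + d * σ (n + 1) * τ (n + 1)) :
    tauY τ (n + 1) * tauY τ n = d * (tauY τ n + 1) * tauW σ τ n + c := by
  have := hσ n; have := hτ (n - 1); have := hτ n
  rw [tauY_succ_mul_tauY hτ, tauY, tauW]
  field_simp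
  linear_combination τ (n - 2) * h₂ + τ n * h₁

theorem tauW_succ_mul_tauY_mul_tauW_eq (hσ : ∀ n, σ n ≠ 0) (hτ : ∀ n, τ n ≠ 0) (n : ℤ)
    (h₁ : σ (n + 2) * τ (n - 2) = d * σ (n + 1) * τ (n - 1) + c * σ n * τ n) :
    tauW σ τ (n + 1) * (tauY τ n * tauW σ τ n) = d * tauW σ τ n + c := by
  have := hσ n; have := hτ (n - 1); have := hτ n
  rw [tauW_succ_mul_tauY_mul_tauW hσ hτ, h₁, tauW]
  field_simp

end A3Tau

/-- The tau-function substitution `yₙ = τ_{n-2}τ_{n+1}/(τ_{n-1}τₙ)`,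
`wₙ = σ_{n+1}τ_{n-1}/(σₙτₙ)` transforms solutions of the bilinear system
`σ_{n+2}τ_{n-2} = d σ_{n+1}τ_{n-1} + c σₙτₙ`, `σₙτ_{n+2} = σ_{n+2}τₙ + d σ_{n+1}τ_{n+1}`
into solutions of the deformed `A₃` reduced map (with `e = c`). -/
theorem tau_substitution_solves_A3map {F : Type*} [Field F] (c d : F)
    (σ τ : ℤ → F) (hσ : ∀ n, σ n ≠ 0) (hτ : ∀ n, τ n ≠ 0)
    (hbil1 : ∀ n : ℤ, σ (n + 2) * τ (n - 2) = d * σ (n + 1) * τ (n - 1) + c * σ n * τ n)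
    (hbil2 : ∀ n : ℤ, σ n * τ (n + 2) = σ (n + 2) * τ n + d * σ (n + 1) * τ (n + 1))
    (y w : ℤ → F)
    (hy : ∀ n : ℤ, y n = τ (n - 2) * τ (n + 1) / (τ (n - 1) * τ n))
    (hw : ∀ n : ℤ, w n = σ (n + 1) * τ (n - 1) / (σ n * τ n)) :
    ∀ n : ℤ, y (n + 1) = (d * (y n + 1) * w n + c) / y n ∧
      w (n + 1) = (d * w n + c) / (y n * w n) := by
  obtain rfl : y = A3Tau.tauY τ := funext hy
  obtain rfl : w = A3Tau.tauW σ τ := funext hw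
  intro n
  have hy₀ := A3Tau.tauY_ne_zero hτ n
  have hw₀ := A3Tau.tauW_ne_zero hσ hτ n
  exact ⟨eq_div_of_mul_eq hy₀ (A3Tau.tauY_succ_mul_tauY_eq hσ hτ n (hbil1 n) (hbil2 n)),
    eq_div_of_mul_eq (mul_ne_zero hy₀ hw₀)
      (A3Tau.tauW_succ_mul_tauY_mul_tauW_eq hσ hτ n (hbil1 n))⟩
end

section
/- The undeformed A4 cluster map φ (with a_1 = a_4 = b_1 = b_4 = 1), defined by x_1' x_1 = 1 + x_2, x_2' x_2 = 1 + x_1' x_3, x_3' x_3 = 1 + x_2' x_4, x_4' x_4 = 1 + x_3', is periodic with period 7: φ⁷(x) = x for all x in the domain where all iterates are defined. -/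
/-!
The orbit of `x` under `φ` runs through the fourteen cluster variables of type `A₄`, Laurent
polynomials in `x`, each of which occurs in exactly two of the seven clusters `x, φ x, …, φ⁶ x`.
Writing these clusters down explicitly, `φ` maps each one to the next and the last one back to
`x`: as the exchange relations determine `φ v` from `v` once the entries of `v` are nonzero,
this comes down to 28 identities between rational functions.
-/

/-- The undeformed `A₄` cluster map `φ = μ₄μ₃μ₂μ₁` (with `a₁ = a₄ = b₁ = b₄ = 1`). -/
def A4map {F : Type*} [Field F] (x : Fin 4 → F) : Fin 4 → F :=
  let x₁' := (1 + x 1) / x 0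
  let x₂' := (1 + x₁' * x 2) / x 1
  let x₃' := (1 + x₂' * x 3) / x 2
  let x₄' := (1 + x₃') / x 3
  ![x₁', x₂', x₃', x₄']

open Fin.NatCast in
theorem Function.iterate_eq_of_cyclic {α : Type*} {m : ℕ} [NeZero m] (f : α → α)
    (g : Fin m → α) (P : α → Prop) (hstep : ∀ k, P (g k) → f (g k) = g (k + 1)) :
    ∀ n : ℕ, (∀ k < n, P (f^[k] (g 0))) → f^[n] (g 0) = g n
  | 0, _ => by simp
  | n + 1, hP => by
    have ih := Function.iterate_eq_of_cyclic f g P hstep n fun k hk => hP k (by omega)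
    rw [Function.iterate_succ_apply', ih, hstep _ (ih ▸ hP n n.lt_succ_self), Nat.cast_succ]

section

variable {F : Type*} [Field F]

theorem A4map_eq_of_exchange {v y : Fin 4 → F} (hv : ∀ i, v i ≠ 0)
    (e₀ : y 0 * v 0 = 1 + v 1) (e₁ : y 1 * v 1 = 1 + y 0 * v 2)
    (e₂ : y 2 * v 2 = 1 + y 1 * v 3) (e₃ : y 3 * v 3 = 1 + y 2) :
    A4map v = y := by
  have y₀ := eq_div_of_mul_eq (hv 0) e₀
  have y₁ := eq_div_of_mul_eq (hv 1) e₁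
  have y₂ := eq_div_of_mul_eq (hv 2) e₂
  have y₃ := eq_div_of_mul_eq (hv 3) e₃
  ext i
  fin_cases i <;> simp [A4map, ← y₀, ← y₁, ← y₂, ← y₃]

/-- The seven clusters `x, φ x, …, φ⁶ x`, written through the fourteen cluster variables. -/
def A4orbit (x : Fin 4 → F) : Fin 7 → Fin 4 → F :=
  let a := x 0
  let b := x 1
  let c := x 2
  let d := x 3
  let p₁ := (1 + b) / a
  let p₂ := (a + c + b * c) / (a * b)
  let p₃ := (a * b + a * d + c * d + b * c * d) / (a * b * c)
  let p₄ := (a * b + a * d + c * d + b * c * d + a * b * c) / (a * b * c * d)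
  let q₁ := (a + c) / b
  let q₂ := (a * b + a * d + c * d) / (b * c)
  let q₃ := (a * b + a * d + c * d + a * b * c) / (b * c * d)
  let r₁ := (b + d) / c
  let r₂ := (b + d + b * c) / (c * d)
  let s := (1 + c) / d
  ![x, ![p₁, p₂, p₃, p₄], ![q₁, q₂, q₃, a], ![r₁, r₂, b, p₁], ![s, c, p₂, q₁],
    ![d, p₃, q₂, r₁], ![p₄, q₃, r₂, s]]

theorem A4map_A4orbit {x : Fin 4 → F} (hx : ∀ i, x i ≠ 0) (k : Fin 7)
    (hk : ∀ i, A4orbit x k i ≠ 0) : A4map (A4orbit x k) = A4orbit x (k + 1) := by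
  have := hx 0
  have := hx 1
  have := hx 2
  have := hx 3
  apply A4map_eq_of_exchange hk <;> fin_cases k <;> simp [A4orbit] <;> field_simp <;> ring

end

theorem A4map_period_seven_general {F : Type*} [Field F] (x : Fin 4 → F)
    (h : ∀ k < 7, ∀ i, (A4map^[k] x) i ≠ 0) :
    A4map^[7] x = x :=
  Function.iterate_eq_of_cyclic A4map (A4orbit x) (fun v => ∀ i, v i ≠ 0)
    (A4map_A4orbit (h 0 (by norm_num))) 7 h

/-- The undeformed `A₄` cluster map is periodic with period 7 wherever all iterates
are defined. -/
theorem A4map_period_seven {F : Type*} [Field F] [CharZero F] (x : Fin 4 → F)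
    (h : ∀ k < 7, ∀ i, (A4map^[k] x) i ≠ 0) :
    A4map^[7] x = x :=
  A4map_period_seven_general x h
end

section
/- The (2,2) sine-Gordon reduced map φ̂(y_1, y_2) = (ỹ_1, ỹ_2), where ỹ_2 = (1/y_2)·((a_1 y_1 + a_3)/(a_2 y_1 + a_1))² and ỹ_1 = (1/y_1)·((a_1 ỹ_2 + a_3)/(a_2 ỹ_2 + a_1))², preserves the function K(y_1,y_2) = (a_2² y_1² y_2² + 2a_1 a_2 (y_1² y_2 + y_1 y_2²) + a_1²(y_1² + y_2²) + 2a_1 a_3 (y_1 + y_2) + a_3²)/(y_1 y_2): K(φ̂(y_1,y_2)) = K(y_1,y_2). -/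
/-!
For fixed `x`, `x * y * K(x, y)` is a quadratic polynomial in `y` with leading coefficient
`(a₂ x + a₁)²` and constant term `(a₁ x + a₃)²`, so `K(x, ·) = A y + B + C / y` takes the same value
at `y` and at its Vieta partner `C / (A y)`. Each half-step of the map replaces one coordinate by its
Vieta partner, and `K` is symmetric.
-/

/-- The conserved quantity `K` of the `(2,2)` sine-Gordon reduced map. -/
def sg22K {F : Type*} [Field F] (a₁ a₂ a₃ y₁ y₂ : F) : F :=
  (a₂ ^ 2 * y₁ ^ 2 * y₂ ^ 2 + 2 * a₁ * a₂ * (y₁ ^ 2 * y₂ + y₁ * y₂ ^ 2)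
    + a₁ ^ 2 * (y₁ ^ 2 + y₂ ^ 2) + 2 * a₁ * a₃ * (y₁ + y₂) + a₃ ^ 2) / (y₁ * y₂)

section

variable {F : Type*} [Field F]

theorem ne_zero_of_eq_one_div_mul {w y z : F} (hz : z ≠ 0) (e : z = 1 / y * w) : y ≠ 0 := by
  rintro rfl
  simp [e] at hz

theorem sq_mul_mul_eq_sq_of_eq_one_div_mul_div_sq {p q y z : F} (hz : z ≠ 0)
    (e : z = 1 / y * (p / q) ^ 2) : q ^ 2 * (y * z) = p ^ 2 := by
  have hy := ne_zero_of_eq_one_div_mul hz e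
  have hq : q ≠ 0 := by rintro rfl; simp [e] at hz
  rw [e]
  field_simp

theorem sg22K_comm (a₁ a₂ a₃ x y : F) : sg22K a₁ a₂ a₃ x y = sg22K a₁ a₂ a₃ y x := by
  unfold sg22K
  ring

theorem sg22K_eq_of_vieta (a₁ a₂ a₃ : F) {x y z : F} (hy : y ≠ 0) (hz : z ≠ 0)
    (h : (a₂ * x + a₁) ^ 2 * (y * z) = (a₁ * x + a₃) ^ 2) :
    sg22K a₁ a₂ a₃ x z = sg22K a₁ a₂ a₃ x y := by
  rcases eq_or_ne x 0 with rfl | hx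
  · simp [sg22K] -- both sides are `_ / 0 = 0`
  unfold sg22K
  field_simp
  linear_combination (z - y) * h

end

theorem sg22_K_invariant_general {F : Type*} [Field F] (a₁ a₂ a₃ y₁ y₂ z₁ z₂ : F)
    (e₂ : z₂ = (1 / y₂) * ((a₁ * y₁ + a₃) / (a₂ * y₁ + a₁)) ^ 2)
    (e₁ : z₁ = (1 / y₁) * ((a₁ * z₂ + a₃) / (a₂ * z₂ + a₁)) ^ 2)
    (h₁' : z₁ ≠ 0) (h₂' : z₂ ≠ 0) :
    sg22K a₁ a₂ a₃ z₁ z₂ = sg22K a₁ a₂ a₃ y₁ y₂ := by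
  have hv₂ := sq_mul_mul_eq_sq_of_eq_one_div_mul_div_sq h₂' e₂
  have hv₁ := sq_mul_mul_eq_sq_of_eq_one_div_mul_div_sq h₁' e₁
  have hy₁ := ne_zero_of_eq_one_div_mul h₁' e₁
  have hy₂ := ne_zero_of_eq_one_div_mul h₂' e₂
  calc sg22K a₁ a₂ a₃ z₁ z₂ = sg22K a₁ a₂ a₃ z₂ z₁ := sg22K_comm ..
    _ = sg22K a₁ a₂ a₃ z₂ y₁ := sg22K_eq_of_vieta a₁ a₂ a₃ hy₁ h₁' hv₁
    _ = sg22K a₁ a₂ a₃ y₁ z₂ := sg22K_comm ..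
    _ = sg22K a₁ a₂ a₃ y₁ y₂ := sg22K_eq_of_vieta a₁ a₂ a₃ hy₂ h₂' hv₂

/-- The `(2,2)` sine-Gordon reduced map preserves `K`. -/
theorem sg22_K_invariant {F : Type*} [Field F] (a₁ a₂ a₃ y₁ y₂ z₁ z₂ : F)
    (h₁ : y₁ ≠ 0) (h₂ : y₂ ≠ 0)
    (hd₁ : a₂ * y₁ + a₁ ≠ 0)
    (e₂ : z₂ = (1 / y₂) * ((a₁ * y₁ + a₃) / (a₂ * y₁ + a₁)) ^ 2)
    (hd₂ : a₂ * z₂ + a₁ ≠ 0)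
    (e₁ : z₁ = (1 / y₁) * ((a₁ * z₂ + a₃) / (a₂ * z₂ + a₁)) ^ 2)
    (h₁' : z₁ ≠ 0) (h₂' : z₂ ≠ 0) :
    sg22K a₁ a₂ a₃ z₁ z₂ = sg22K a₁ a₂ a₃ y₁ y₂ :=
  sg22_K_invariant_general a₁ a₂ a₃ y₁ y₂ z₁ z₂ e₂ e₁ h₁' h₂'
end

section
/- The (2,2) sine-Gordon reduced map φ̂ preserves the symplectic form dy_1 ∧ dy_2/(y_1 y_2): if (ỹ_1, ỹ_2) = φ̂(y_1, y_2) then det Dφ̂(y_1,y_2) · y_1 y_2 = ỹ_1 ỹ_2. -/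
/-!
With `g x = ((a₁ x + a₃) / (a₂ x + a₁))²`, the map `φ̂` factors as `σ ∘ ι ∘ σ ∘ ι`, where
`ι (x, y) = (x, g x / y)` and `σ` swaps the coordinates. Each factor reverses the sign of
`dy₁ ∧ dy₂ / (y₁ y₂)`: for `σ` this is clear, and `ι` has Jacobian determinant `-g x / y²`.
Hence the composite of four factors preserves the form.
-/

/-- The second component of the `(2,2)` sine-Gordon reduced map. -/
noncomputable def sg22snd (a₁ a₂ a₃ : ℝ) (p : ℝ × ℝ) : ℝ :=
  (1 / p.2) * ((a₁ * p.1 + a₃) / (a₂ * p.1 + a₁)) ^ 2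

/-- The first component of the `(2,2)` sine-Gordon reduced map. -/
noncomputable def sg22fst (a₁ a₂ a₃ : ℝ) (p : ℝ × ℝ) : ℝ :=
  (1 / p.1) * ((a₁ * sg22snd a₁ a₂ a₃ p + a₃) / (a₂ * sg22snd a₁ a₂ a₃ p + a₁)) ^ 2

theorem LinearMap.det_finTwoProd {R : Type*} [CommRing R] (L : R × R →ₗ[R] R × R) :
    LinearMap.det L = (L (1, 0)).1 * (L (0, 1)).2 - (L (0, 1)).1 * (L (1, 0)).2 := by
  rw [← LinearMap.det_toMatrix (Module.Basis.finTwoProd R), Matrix.det_fin_two]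
  simp [LinearMap.toMatrix_apply]

theorem det_partials_eq_det_fderiv {f g : ℝ × ℝ → ℝ} {p : ℝ × ℝ}
    (hf : DifferentiableAt ℝ f p) (hg : DifferentiableAt ℝ g p) :
    !![fderiv ℝ f p (1, 0), fderiv ℝ f p (0, 1); fderiv ℝ g p (1, 0), fderiv ℝ g p (0, 1)].det =
      LinearMap.det (fderiv ℝ (fun q => (f q, g q)) p : ℝ × ℝ →ₗ[ℝ] ℝ × ℝ) := by
  rw [hf.fderiv_prodMk hg, LinearMap.det_finTwoProd, Matrix.det_fin_two_of]
  rfl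

/-- `Φ^*(dx ∧ dy / (x y)) = c • dx ∧ dy / (x y)` at `p`, cleared of denominators. -/
def ScalesLogFormAt (c : ℝ) (Φ : ℝ × ℝ → ℝ × ℝ) (p : ℝ × ℝ) : Prop :=
  DifferentiableAt ℝ Φ p ∧
    LinearMap.det (fderiv ℝ Φ p : ℝ × ℝ →ₗ[ℝ] ℝ × ℝ) * (p.1 * p.2) = c * ((Φ p).1 * (Φ p).2)

theorem ScalesLogFormAt.comp {c d : ℝ} {Φ Ψ : ℝ × ℝ → ℝ × ℝ} {p : ℝ × ℝ}
    (hΦ : ScalesLogFormAt c Φ (Ψ p)) (hΨ : ScalesLogFormAt d Ψ p) :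
    ScalesLogFormAt (c * d) (Φ ∘ Ψ) p := by
  refine ⟨hΦ.1.comp p hΨ.1, ?_⟩
  rw [fderiv_comp p hΦ.1 hΨ.1, ContinuousLinearMap.toLinearMap_comp, LinearMap.det_comp, mul_assoc,
    hΨ.2, mul_left_comm, hΦ.2, Function.comp_apply]
  ring

theorem scalesLogFormAt_swap (p : ℝ × ℝ) : ScalesLogFormAt (-1) Prod.swap p := by
  have hσ : (Prod.swap : ℝ × ℝ → ℝ × ℝ) =
      (ContinuousLinearMap.snd ℝ ℝ ℝ).prod (ContinuousLinearMap.fst ℝ ℝ ℝ) := rfl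
  refine ⟨hσ ▸ ContinuousLinearMap.differentiableAt _, ?_⟩
  rw [hσ, ContinuousLinearMap.fderiv, LinearMap.det_finTwoProd]
  simp [mul_comm]

noncomputable def fiberInvolution (g : ℝ → ℝ) (q : ℝ × ℝ) : ℝ × ℝ := (q.1, g q.1 / q.2)

theorem scalesLogFormAt_fiberInvolution {g : ℝ → ℝ} {p : ℝ × ℝ}
    (hg : DifferentiableAt ℝ g p.1) (hp : p.2 ≠ 0) :
    ScalesLogFormAt (-1) (fiberInvolution g) p := by
  have hdiv : DifferentiableAt ℝ (fun q : ℝ × ℝ => g q.1 / q.2) p := by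
    fun_prop (disch := exact hp)
  have hline : HasDerivAt (fun t => g p.1 / t) (-(g p.1) / p.2 ^ 2) p.2 := by
    simpa [div_eq_mul_inv] using (hasDerivAt_inv hp).const_mul (g p.1)
  have hpartial : fderiv ℝ (fun q : ℝ × ℝ => g q.1 / q.2) p (0, 1) = -(g p.1) / p.2 ^ 2 := by
    have hcomp := hdiv.hasFDerivAt.comp_hasDerivAt p.2
      ((hasDerivAt_const p.2 p.1).prodMk (hasDerivAt_id' p.2))
    exact hcomp.unique hline
  refine ⟨differentiableAt_fst.prodMk hdiv, ?_⟩
  unfold fiberInvolution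
  rw [differentiableAt_fst.fderiv_prodMk hdiv, LinearMap.det_finTwoProd]
  simp only [ContinuousLinearMap.coe_coe, ContinuousLinearMap.prod_apply, fderiv_fst,
    ContinuousLinearMap.coe_fst', hpartial, zero_mul, sub_zero, one_mul]
  field_simp

/-- The `(2,2)` sine-Gordon reduced map preserves the symplectic form
`dy₁ ∧ dy₂/(y₁y₂)`: the determinant of its Jacobian matrix times `y₁y₂` equals the
product of the coordinates of the image point. -/
theorem sg22_symplectic (a₁ a₂ a₃ y₁ y₂ : ℝ)
    (h₁ : y₁ ≠ 0) (h₂ : y₂ ≠ 0)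
    (hd₁ : a₂ * y₁ + a₁ ≠ 0)
    (hd₂ : a₂ * sg22snd a₁ a₂ a₃ (y₁, y₂) + a₁ ≠ 0) :
    (Matrix.det
      !![fderiv ℝ (sg22fst a₁ a₂ a₃) (y₁, y₂) (1, 0),
         fderiv ℝ (sg22fst a₁ a₂ a₃) (y₁, y₂) (0, 1);
         fderiv ℝ (sg22snd a₁ a₂ a₃) (y₁, y₂) (1, 0),
         fderiv ℝ (sg22snd a₁ a₂ a₃) (y₁, y₂) (0, 1)]) * (y₁ * y₂)
      = sg22fst a₁ a₂ a₃ (y₁, y₂) * sg22snd a₁ a₂ a₃ (y₁, y₂) := by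
  set g : ℝ → ℝ := fun x => ((a₁ * x + a₃) / (a₂ * x + a₁)) ^ 2
  have hg {x : ℝ} (hx : a₂ * x + a₁ ≠ 0) : DifferentiableAt ℝ g x := by
    fun_prop (disch := exact hx)
  have hsnd : sg22snd a₁ a₂ a₃ (y₁, y₂) = g y₁ / y₂ := by
    simp [sg22snd, g, div_eq_inv_mul]
  rw [hsnd] at hd₂
  have hφ : (fun p => (sg22fst a₁ a₂ a₃ p, sg22snd a₁ a₂ a₃ p)) =
      Prod.swap ∘ fiberInvolution g ∘ Prod.swap ∘ fiberInvolution g := by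
    funext p
    simp [sg22fst, sg22snd, fiberInvolution, g, div_eq_inv_mul]
  have hsympl : ScalesLogFormAt 1 (fun p => (sg22fst a₁ a₂ a₃ p, sg22snd a₁ a₂ a₃ p)) (y₁, y₂) := by
    rw [hφ]
    simpa using (scalesLogFormAt_swap _).comp <|
      (scalesLogFormAt_fiberInvolution (hg hd₂) h₁).comp <|
        (scalesLogFormAt_swap _).comp (scalesLogFormAt_fiberInvolution (hg hd₁) h₂)
  rw [det_partials_eq_det_fderiv hsympl.1.fst hsympl.1.snd, hsympl.2, one_mul]
end
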